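/- Let ℓ ≥ 1 and let S be a string (indexed from 0) over the alphabet of 2ℓ symbols consisting of an open and a close parenthesis of each of ℓ types. Fix a type t, and let S_t be the string over a single type of parentheses obtained from S by replacing every open parenthesis of type t by two consecutive open parentheses, every close parenthesis of type t by two consecutive close parentheses, and every symbol of any other type by a matching open–close pair '()'. Then for every position i such that S[i] is a parenthesis of type t: the type-t match of S at position i exists if and only if the match of S_t at position 2i exists, and in that case match_t(S, i) = ⌊match(S_t, 2i) / 2⌋. -/

import Mathlib

/-- A string over one type of parentheses (`true` = open, `false` = close) is balanced
if it has equally many opens and closes and every prefix has at least as many opens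
as closes. -/
def BalancedParen (s : List Bool) : Prop :=
  s.count true = s.count false ∧ ∀ k : ℕ, (s.take k).count false ≤ (s.take k).count true

/-- `OpenMatch R i j` : in the one-type string `R`, position `j` is the match of the open
parenthesis at position `i`: `i < j`, `R[i]` is open, `R[j]` is close, the substring of
`R` strictly between `i` and `j` is balanced, and `j` is minimal among such positions. -/
def OpenMatch (R : List Bool) (i j : ℕ) : Prop :=
  i < j ∧ j < R.length ∧ R.getD i false = true ∧ R.getD j true = false ∧
    BalancedParen ((R.drop (i + 1)).take (j - (i + 1))) ∧
    ∀ j' : ℕ, i < j' → j' < j →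
      ¬ (R.getD j' true = false ∧ BalancedParen ((R.drop (i + 1)).take (j' - (i + 1))))

/-- `MatchRel R i j` : positions `i` and `j` are a matching open/close pair of `R`
(in either order). -/
def MatchRel (R : List Bool) (i j : ℕ) : Prop :=
  OpenMatch R i j ∨ OpenMatch R j i

variable {ℓ : ℕ}

/-- A symbol of a string over `ℓ` types of parentheses: its type and whether it is
open (`true`) or close (`false`). -/
abbrev MSym (ℓ : ℕ) := Fin ℓ × Bool

/-- The one-type string `S_t`: every open (resp. close) parenthesis of type `t` is
replaced by two consecutive opens (resp. closes), and every symbol of any other type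
is replaced by a matching open–close pair `()`. -/
def expandType (t : Fin ℓ) (S : List (MSym ℓ)) : List Bool :=
  S.flatMap fun s => if s.1 = t then [s.2, s.2] else [true, false]

/-- The positions of `S` holding a symbol of type `t`, in increasing order. -/
def typePositions (t : Fin ℓ) (S : List (MSym ℓ)) : List ℕ :=
  (List.range S.length).filter fun p =>
    match S[p]? with
    | some s => decide (s.1 = t)
    | none => false

/-- The subsequence of `S` consisting of the type-`t` symbols, as a one-type string. -/
def typeSubseq (t : Fin ℓ) (S : List (MSym ℓ)) : List Bool :=
  (S.filter fun s => decide (s.1 = t)).map Prod.snd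

/-- `TMatch t S i j` : the type-`t` match of `S` at position `i` is `j`, obtained by
applying the one-type matching to the subsequence of type-`t` symbols of `S` and
translating positions back to `S`. -/
def TMatch (t : Fin ℓ) (S : List (MSym ℓ)) (i j : ℕ) : Prop :=
  ∃ a b : ℕ, (typePositions t S)[a]? = some i ∧ (typePositions t S)[b]? = some j ∧
    MatchRel (typeSubseq t S) a b


namespace Aux


def D (R : List Bool) (k : ℕ) : ℤ :=
  ((R.take k).count true : ℤ) - ((R.take k).count false : ℤ)

lemma count_take_add (R : List Bool) (a m : ℕ) (b : Bool) :
    (R.take (a + m)).count b = (R.take a).count b + ((R.drop a).take m).count b := by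
  rw [List.take_add, List.count_append]

lemma D_take_add (R : List Bool) (a m : ℕ) :
    D R (a + m) = D R a + ((((R.drop a).take m).count true : ℤ) - (((R.drop a).take m).count false : ℤ)) := by
  simp only [D, count_take_add]; push_cast; ring

lemma getD_eq_get? (R : List Bool) (n : ℕ) (d : Bool) (h : n < R.length) (b : Bool) :
    R.getD n d = b ↔ R[n]? = some b := by
  simp [List.getD_eq_getElem?_getD, List.getElem?_eq_getElem h]

lemma D_step (R : List Bool) {n : ℕ} {b : Bool} (h : R[n]? = some b) :
    D R (n + 1) = D R n + (if b then 1 else -1) := by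
  have h' : R[n]? = some b := by exact h
  have : R.take (n+1) = R.take n ++ [b] := by
    rw [List.take_succ, h']; rfl
  cases b <;> simp [D, this, List.count_append] <;> push_cast <;> ring

lemma balanced_iff (R : List Bool) (a L : ℕ) :
    BalancedParen ((R.drop a).take L) ↔
      (D R (a + L) = D R a ∧ ∀ k, k ≤ L → D R a ≤ D R (a + k)) := by
  constructor
  · rintro ⟨h1, h2⟩
    have e := D_take_add R a L
    refine ⟨by omega, fun k hk => ?_⟩
    have h2k := h2 k
    rw [List.take_take, min_eq_left hk] at h2k
    have e2 := D_take_add R a k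
    omega
  · rintro ⟨h1, h2⟩
    have e := D_take_add R a L
    constructor
    · omega
    · intro k
      rw [List.take_take]
      have e2 := D_take_add R a (min k L)
      have := h2 (min k L) (min_le_right _ _)
      omega

def DMatch (R : List Bool) (i j : ℕ) : Prop :=
  i < j ∧ j < R.length ∧ R[i]? = some true ∧ R[j]? = some false ∧
    D R j = D R i + 1 ∧ ∀ m, i < m → m ≤ j → D R i + 1 ≤ D R m

lemma openMatch_iff_dmatch (R : List Bool) (i j : ℕ) :
    OpenMatch R i j ↔ DMatch R i j := by
  constructor
  · rintro ⟨hij, hj, hi, hjv, hbal, _hmin⟩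
    have hilen : i < R.length := lt_trans hij hj
    rw [getD_eq_get? R i false hilen] at hi
    rw [getD_eq_get? R j true hj] at hjv
    rw [balanced_iff] at hbal
    have hstep : D R (i+1) = D R i + 1 := by rw [D_step R hi]; simp
    have hL : (i + 1) + (j - (i+1)) = j := by omega
    rw [hL] at hbal
    obtain ⟨hb1, hb2⟩ := hbal
    refine ⟨hij, hj, hi, hjv, by omega, fun m hm1 hm2 => ?_⟩
    have := hb2 (m - (i+1)) (by omega)
    rw [show (i+1) + (m - (i+1)) = m by omega] at this
    omega
  · rintro ⟨hij, hj, hi, hjv, hD, hall⟩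
    have hilen : i < R.length := lt_trans hij hj
    have hstep : D R (i+1) = D R i + 1 := by rw [D_step R hi]; simp
    refine ⟨hij, hj, (getD_eq_get? R i false hilen true).2 hi, (getD_eq_get? R j true hj false).2 hjv, ?_, ?_⟩
    · rw [balanced_iff, show (i + 1) + (j - (i+1)) = j by omega]
      exact ⟨by omega, fun k hk => by have := hall ((i+1)+k) (by omega) (by omega); omega⟩
    · rintro j' hj'1 hj'2 ⟨hj'v, hbal⟩
      rw [getD_eq_get? R j' true (lt_trans hj'2 hj)] at hj'v
      rw [balanced_iff, show (i + 1) + (j' - (i+1)) = j' by omega] at hbal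
      have hstep' : D R (j'+1) = D R j' - 1 := by rw [D_step R hj'v]; simp [sub_eq_add_neg]
      have := hall (j'+1) (by omega) (by omega)
      omega

lemma dmatch_right_unique {R : List Bool} {i j j' : ℕ}
    (h : DMatch R i j) (h' : DMatch R i j') : j = j' := by
  rcases lt_trichotomy j j' with hlt | he | hlt
  · exfalso
    have hjv := h.2.2.2.1
    have hall := h'.2.2.2.2.2
    have hij := h.1
    have hstep : D R (j+1) = D R j - 1 := by rw [D_step R hjv]; simp [sub_eq_add_neg]
    have h1 := hall (j+1) (by omega) (by omega)
    have hD := h.2.2.2.2.1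
    linarith
  · exact he
  · exfalso
    have hjv := h'.2.2.2.1
    have hall := h.2.2.2.2.2
    have hij := h'.1
    have hstep : D R (j'+1) = D R j' - 1 := by rw [D_step R hjv]; simp [sub_eq_add_neg]
    have h1 := hall (j'+1) (by omega) (by omega)
    have hD := h'.2.2.2.2.1
    linarith

lemma dmatch_left_unique {R : List Bool} {a b c : ℕ}
    (h : DMatch R a c) (h' : DMatch R b c) : a = b := by
  rcases lt_trichotomy a b with hlt | he | hlt
  · exfalso
    have hD1 := h.2.2.2.2.1
    have hD2 := h'.2.2.2.2.1
    have := h.2.2.2.2.2 b (by omega) (by exact le_of_lt h'.1)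
    linarith
  · exact he
  · exfalso
    have hD1 := h.2.2.2.2.1
    have hD2 := h'.2.2.2.2.1
    have := h'.2.2.2.2.2 a (by omega) (by exact le_of_lt h.1)
    linarith

lemma matchRel_right_unique {R : List Bool} {i j j' : ℕ}
    (h : MatchRel R i j) (h' : MatchRel R i j') : j = j' := by
  rw [MatchRel, openMatch_iff_dmatch, openMatch_iff_dmatch] at h h'
  rcases h with h | h <;> rcases h' with h' | h'
  · exact dmatch_right_unique h h'
  · exact absurd (h.2.2.1 ▸ h'.2.2.2.1) (by simp)
  · exact absurd (h'.2.2.1 ▸ h.2.2.2.1) (by simp)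
  · exact dmatch_left_unique h h'


def tcount (t : Fin ℓ) (S : List (MSym ℓ)) (m : ℕ) : ℕ :=
  (S.take m).countP fun s => decide (s.1 = t)

lemma tcount_mono (t : Fin ℓ) (S : List (MSym ℓ)) {m n : ℕ} (h : m ≤ n) :
    tcount t S m ≤ tcount t S n := by
  have : S.take m = (S.take n).take m := by rw [List.take_take, min_eq_left h]
  rw [tcount, this]
  exact List.Sublist.countP_le (List.take_sublist _ _)

lemma tcount_succ (t : Fin ℓ) (S : List (MSym ℓ)) {m : ℕ} {s : MSym ℓ}
    (h : S[m]? = some s) :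
    tcount t S (m+1) = tcount t S m + (if s.1 = t then 1 else 0) := by
  have h' : S[m]? = some s := by exact h
  rw [tcount, List.take_succ, h', List.countP_append, tcount]
  by_cases hx : s.1 = t <;> simp [hx]

lemma tcount_stab (t : Fin ℓ) (S : List (MSym ℓ)) {m : ℕ} (h : S.length ≤ m) :
    tcount t S m = tcount t S S.length := by
  rw [tcount, tcount, List.take_length, List.take_of_length_le h]

lemma typeSubseq_length (t : Fin ℓ) (S : List (MSym ℓ)) :
    (typeSubseq t S).length = tcount t S S.length := by
  simp [typeSubseq, tcount, List.take_length, ← List.countP_eq_length_filter]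

lemma expand_cons (t : Fin ℓ) (x : MSym ℓ) (S : List (MSym ℓ)) :
    expandType t (x :: S) = (if x.1 = t then [x.2, x.2] else [true, false]) ++ expandType t S := by
  simp [expandType]

lemma subseq_cons (t : Fin ℓ) (x : MSym ℓ) (S : List (MSym ℓ)) :
    typeSubseq t (x :: S) = (if x.1 = t then [x.2] else []) ++ typeSubseq t S := by
  by_cases hx : x.1 = t <;> simp [typeSubseq, List.filter_cons, hx]

lemma tcount_cons_succ (t : Fin ℓ) (x : MSym ℓ) (S : List (MSym ℓ)) (m : ℕ) :
    tcount t (x :: S) (m+1) = (if x.1 = t then 1 else 0) + tcount t S m := by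
  rw [tcount, List.take_succ_cons, List.countP_cons, tcount]
  by_cases hx : x.1 = t <;> simp [hx] <;> omega

lemma expand_length (t : Fin ℓ) (S : List (MSym ℓ)) :
    (expandType t S).length = 2 * S.length := by
  induction S with
  | nil => simp [expandType]
  | cons x S ih =>
    rw [expand_cons, List.length_append, ih]
    by_cases hx : x.1 = t <;> simp [hx] <;> omega

lemma expand_get (t : Fin ℓ) (S : List (MSym ℓ)) {m : ℕ} {s : MSym ℓ}
    (h : S[m]? = some s) :
    (expandType t S)[(2*m)]? = some (if s.1 = t then s.2 else true) ∧
    (expandType t S)[(2*m+1)]? = some (if s.1 = t then s.2 else false) := by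
  induction S generalizing m with
  | nil => simp at h
  | cons x S ih =>
    rw [expand_cons]
    match m with
    | 0 =>
      rw [List.getElem?_cons_zero] at h
      have hs : x = s := by injection h
      subst hs
      by_cases hx : x.1 = t <;> simp [hx]
    | m+1 =>
      rw [List.getElem?_cons_succ] at h
      have h2 : 2 * (m + 1) = (if x.1 = t then [x.2, x.2] else [true, false]).length + (2*m) := by
        by_cases hx : x.1 = t <;> simp [hx] <;> omega
      have h3 : 2 * (m + 1) + 1 = (if x.1 = t then [x.2, x.2] else [true, false]).length + (2*m+1) := by
        by_cases hx : x.1 = t <;> simp [hx] <;> omega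
      constructor
      · rw [h2, List.getElem?_append_right (by omega), Nat.add_sub_cancel_left]
        exact (ih h).1
      · rw [h3, List.getElem?_append_right (by omega), Nat.add_sub_cancel_left]
        exact (ih h).2

lemma D_append (xs ys : List Bool) (n : ℕ) :
    D (xs ++ ys) (xs.length + n) = D xs xs.length + D ys n := by
  unfold D
  rw [List.take_add, List.take_left, List.drop_left, List.take_length,
    List.count_append, List.count_append]
  push_cast; ring

lemma D_expand (t : Fin ℓ) (S : List (MSym ℓ)) (m : ℕ) :
    D (expandType t S) (2*m) = 2 * D (typeSubseq t S) (tcount t S m) := by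
  induction S generalizing m with
  | nil => simp [expandType, typeSubseq, D, tcount]
  | cons x S ih =>
    match m with
    | 0 => simp [D, tcount]
    | m+1 =>
      rw [expand_cons, subseq_cons]
      have htc : tcount t (x :: S) (m+1) =
          (if x.1 = t then [x.2] else []).length + tcount t S m := by
        rw [tcount_cons_succ]
        by_cases hx : x.1 = t <;> simp [hx]
      rw [htc]
      have h2 : 2 * (m + 1) = (if x.1 = t then [x.2, x.2] else [true, false]).length + 2*m := by
        by_cases hx : x.1 = t <;> simp [hx] <;> omega
      rw [h2, D_append, D_append, ih]
      by_cases hx : x.1 = t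
      · cases hb : x.2 <;> simp [hx, hb, D] <;> ring
      · simp [hx, D]

lemma tp_cons (t : Fin ℓ) (x : MSym ℓ) (S : List (MSym ℓ)) :
    typePositions t (x :: S) =
      (if x.1 = t then [0] else []) ++ (typePositions t S).map Nat.succ := by
  show (List.range (S.length + 1)).filter _ = _
  rw [List.range_succ_eq_map, List.filter_cons, List.filter_map]
  have hcomp : ((fun p => match (x :: S)[p]? with
      | some s => decide (s.1 = t)
      | none => false) ∘ Nat.succ) = (fun p => match S[p]? with
      | some s => decide (s.1 = t)
      | none => false) := rfl
  rw [hcomp]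
  by_cases hx : x.1 = t <;> simp [hx, typePositions]

lemma tp_length (t : Fin ℓ) (S : List (MSym ℓ)) :
    (typePositions t S).length = tcount t S S.length := by
  induction S with
  | nil => rfl
  | cons x S ih =>
    rw [tp_cons, List.length_append, List.length_map, ih]
    rw [List.length_cons, tcount_cons_succ]
    by_cases hx : x.1 = t <;> simp [hx]

lemma tp_get (t : Fin ℓ) (S : List (MSym ℓ)) {m : ℕ} {s : MSym ℓ}
    (h : S[m]? = some s) (ht : s.1 = t) :
    (typePositions t S)[(tcount t S m)]? = some m := by
  induction S generalizing m with
  | nil => simp at h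
  | cons x S ih =>
    rw [tp_cons]
    match m with
    | 0 =>
      rw [List.getElem?_cons_zero] at h
      have hs : x = s := by injection h
      subst hs
      simp [ht, tcount]
    | m+1 =>
      rw [List.getElem?_cons_succ] at h
      rw [tcount_cons_succ]
      by_cases hx : x.1 = t
      · simp only [hx, if_pos]
        rw [show (1 + tcount t S m) = tcount t S m + 1 by omega]
        simp only [List.cons_append, List.nil_append, List.getElem?_cons_succ, List.getElem?_map, ih h]
        rfl
      · rw [show ((if x.1 = t then 1 else 0) + tcount t S m) = tcount t S m by simp [hx]]
        simp only [hx, ite_false, List.nil_append, List.getElem?_map, ih h]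
        rfl

lemma tsub_get (t : Fin ℓ) (S : List (MSym ℓ)) {m : ℕ} {s : MSym ℓ}
    (h : S[m]? = some s) (ht : s.1 = t) :
    (typeSubseq t S)[(tcount t S m)]? = some s.2 := by
  induction S generalizing m with
  | nil => simp at h
  | cons x S ih =>
    rw [subseq_cons]
    match m with
    | 0 =>
      rw [List.getElem?_cons_zero] at h
      have hs : x = s := by injection h
      subst hs
      simp [ht, tcount]
    | m+1 =>
      rw [List.getElem?_cons_succ] at h
      rw [tcount_cons_succ]
      by_cases hx : x.1 = t
      · simpa [hx, Nat.add_comm] using ih h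
      · simpa [hx] using ih h

lemma tp_mem (t : Fin ℓ) (S : List (MSym ℓ)) {b m : ℕ}
    (h : (typePositions t S)[b]? = some m) :
    ∃ s, S[m]? = some s ∧ s.1 = t ∧ tcount t S m = b := by
  induction S generalizing b m with
  | nil => simp [typePositions] at h
  | cons x S ih =>
    rw [tp_cons] at h
    by_cases hx : x.1 = t
    · simp only [hx, if_pos] at h
      match b with
      | 0 =>
        simp at h
        subst h
        exact ⟨x, rfl, hx, rfl⟩
      | b+1 =>
        simp only [List.cons_append, List.nil_append, List.getElem?_cons_succ] at h
        rw [List.getElem?_map] at h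
        obtain ⟨m', hm', hmm⟩ := Option.map_eq_some_iff.1 h
        obtain ⟨s, h1, h2, h3⟩ := ih hm'
        subst hmm
        refine ⟨s, by simpa using h1, h2, ?_⟩
        rw [tcount_cons_succ, h3]
        simp [hx]; omega
    · simp only [hx, if_neg, ite_false, List.nil_append] at h
      rw [List.getElem?_map] at h
      obtain ⟨m', hm', hmm⟩ := Option.map_eq_some_iff.1 h
      obtain ⟨s, h1, h2, h3⟩ := ih hm'
      subst hmm
      refine ⟨s, by simpa using h1, h2, ?_⟩
      rw [tcount_cons_succ, h3]
      simp [hx]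

lemma tp_nodup (t : Fin ℓ) (S : List (MSym ℓ)) : (typePositions t S).Nodup :=
  List.nodup_range.filter _

lemma D_step_true (R : List Bool) {n : ℕ} (h : R[n]? = some true) :
    D R (n+1) = D R n + 1 := by rw [D_step R h]; simp

lemma D_step_false (R : List Bool) {n : ℕ} (h : R[n]? = some false) :
    D R (n+1) = D R n - 1 := by rw [D_step R h]; simp [sub_eq_add_neg]

lemma D_step_bnd (R : List Bool) {n : ℕ} {b : Bool} (h : R[n]? = some b) :
    D R n - 1 ≤ D R (n+1) ∧ D R (n+1) ≤ D R n + 1 := by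
  cases b
  · rw [D_step_false R h]; omega
  · rw [D_step_true R h]; omega

lemma lt_of_get? {α : Type*} {l : List α} {n : ℕ} {a : α} (h : l[n]? = some a) :
    n < l.length := by
  by_contra hn
  push_neg at hn
  rw [List.getElem?_eq_none hn] at h
  exact absurd h (by simp)

lemma get?_exists {α : Type*} {l : List α} {n : ℕ} (h : n < l.length) :
    ∃ a, l[n]? = some a := ⟨l[n], List.getElem?_eq_getElem h⟩

lemma tc_lt (t : Fin ℓ) (S : List (MSym ℓ)) {p q : ℕ}
    (h : tcount t S p < tcount t S q) : p < q := by
  by_contra hn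
  push_neg at hn
  exact absurd (tcount_mono t S hn) (by omega)

lemma tc_succ_t (t : Fin ℓ) (S : List (MSym ℓ)) {m : ℕ} {s : MSym ℓ}
    (h : S[m]? = some s) (ht : s.1 = t) :
    tcount t S (m+1) = tcount t S m + 1 := by
  rw [tcount_succ t S h]; simp [ht]

lemma tp_surj (t : Fin ℓ) (S : List (MSym ℓ)) {m : ℕ} (h : m < tcount t S S.length) :
    ∃ j s, S[j]? = some s ∧ s.1 = t ∧ tcount t S j = m ∧
      (typePositions t S)[m]? = some j ∧ tcount t S (j+1) = m + 1 ∧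
      (typeSubseq t S)[m]? = some s.2 := by
  have hm : m < (typePositions t S).length := by rw [tp_length]; exact h
  obtain ⟨j, hj⟩ : ∃ j, (typePositions t S)[m]? = some j := get?_exists hm
  obtain ⟨s, h1, h2, h3⟩ := tp_mem t S hj
  refine ⟨j, s, h1, h2, h3, hj, ?_, ?_⟩
  · rw [tc_succ_t t S h1 h2, h3]
  · rw [← h3]; exact tsub_get t S h1 h2

lemma open_fwd (t : Fin ℓ) (S : List (MSym ℓ)) {i : ℕ} {si : MSym ℓ}
    (hsi : S[i]? = some si) (hti : si.1 = t) (hopen : si.2 = true) {b : ℕ}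
    (h : DMatch (typeSubseq t S) (tcount t S i) b) :
    ∃ q : ℕ, (typePositions t S)[b]? = some q ∧
      DMatch (expandType t S) (2 * i) (2 * q + 1) := by
  obtain ⟨hab, hbT, hTa, hTb, hD, hall⟩ := h
  rw [typeSubseq_length] at hbT
  obtain ⟨q, s', hq1, hq2, hq3, hq4, hq5, hq6⟩ := tp_surj t S hbT
  have hs'2 : s'.2 = false := by rw [hq6] at hTb; injection hTb
  have hilen : i < S.length := lt_of_get? hsi
  have hqlen : q < S.length := lt_of_get? hq1
  have hci : tcount t S (i+1) = tcount t S i + 1 := tc_succ_t t S hsi hti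
  have hiq : i < q := tc_lt t S (by omega)
  have hRlen := expand_length t S
  have hEi := (expand_get t S hsi).1
  rw [if_pos hti, hopen] at hEi
  have hEq := (expand_get t S hq1).2
  rw [if_pos hq2, hs'2] at hEq
  have hDi := D_expand t S i
  have hDq := D_expand t S q
  rw [hq3] at hDq
  have hEq0 := (expand_get t S hq1).1
  rw [if_pos hq2, hs'2] at hEq0
  have hstepq : D (expandType t S) (2*q+1) = D (expandType t S) (2*q) - 1 :=
    D_step_false _ hEq0
  refine ⟨q, hq4, by omega, by omega, hEi, hEq, by omega, ?_⟩
  intro m hm1 hm2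
  rcases Nat.even_or_odd m with ⟨p, hp⟩ | ⟨p, hp⟩
  · have hm : m = 2 * p := by omega
    subst hm
    have hcp1 : tcount t S (i+1) ≤ tcount t S p := tcount_mono t S (by omega)
    have hcp2 : tcount t S p ≤ b := by rw [← hq3]; exact tcount_mono t S (by omega)
    have h1 := hall (tcount t S p) (by omega) (by omega)
    have hDp := D_expand t S p
    omega
  · have hm : m = 2 * p + 1 := by omega
    subst hm
    have hplen : p < S.length := by omega
    obtain ⟨sp, hsp⟩ := get?_exists (l := S) hplen
    have hDp := D_expand t S p
    have hstep := D_step_bnd _ ((expand_get t S hsp).1)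
    rcases eq_or_lt_of_le (show i ≤ p by omega) with he | hlt
    · subst he
      have hst : D (expandType t S) (2*i+1) = D (expandType t S) (2*i) + 1 :=
        D_step_true _ hEi
      omega
    · have hcp1 : tcount t S (i+1) ≤ tcount t S p := tcount_mono t S (by omega)
      have hcp2 : tcount t S p ≤ b := by rw [← hq3]; exact tcount_mono t S (by omega)
      have h1 := hall (tcount t S p) (by omega) (by omega)
      omega

lemma open_bwd (t : Fin ℓ) (S : List (MSym ℓ)) {i : ℕ} {si : MSym ℓ}
    (hsi : S[i]? = some si) (hti : si.1 = t) (hopen : si.2 = true) {j' : ℕ}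
    (h : DMatch (expandType t S) (2 * i) j') :
    ∃ q : ℕ, j' = 2 * q + 1 ∧ (typePositions t S)[(tcount t S q)]? = some q ∧
      DMatch (typeSubseq t S) (tcount t S i) (tcount t S q) := by
  obtain ⟨hij, hjR, hR2i, hRj', hD, hall⟩ := h
  have hRlen := expand_length t S
  have hilen : i < S.length := lt_of_get? hsi
  set q := j' / 2 with hqdef
  have hqlen : q < S.length := by omega
  obtain ⟨s', hq1⟩ := get?_exists (l := S) hqlen
  have hDi := D_expand t S i
  have hDq := D_expand t S q
  have hodd : j' = 2 * q + 1 := by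
    rcases Nat.even_or_odd j' with ⟨p, hp⟩ | ⟨p, hp⟩
    · exfalso
      have hj'e : j' = 2 * q := by omega
      rw [hj'e] at hD
      omega
    · omega
  rw [hodd] at hij hD hall hRj'
  have hEq2 := (expand_get t S hq1).2
  have hx : s'.1 = t := by
    by_contra hx
    have hEq1 := (expand_get t S hq1).1
    rw [if_neg hx] at hEq1
    have hstep : D (expandType t S) (2*q+1) = D (expandType t S) (2*q) + 1 :=
      D_step_true _ hEq1
    have hiq : i < q := by
      rcases eq_or_lt_of_le (show i ≤ q by omega) with he | hl
      · exfalso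
        rw [← he, hsi] at hq1
        have : si = s' := by injection hq1
        exact hx (this ▸ hti)
      · exact hl
    have h1 := hall (2*q) (by omega) (by omega)
    omega
  rw [if_pos hx] at hEq2
  have hs'2 : s'.2 = false := by rw [hEq2] at hRj'; injection hRj'
  have hiq : i < q := by
    rcases eq_or_lt_of_le (show i ≤ q by omega) with he | hl
    · exfalso
      rw [← he, hsi] at hq1
      have : si = s' := by injection hq1
      rw [← this, hopen] at hs'2
      exact Bool.noConfusion hs'2
    · exact hl
  have hci : tcount t S (i+1) = tcount t S i + 1 := tc_succ_t t S hsi hti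
  have hcq : tcount t S (q+1) = tcount t S q + 1 := tc_succ_t t S hq1 hx
  have hcgrow : tcount t S (i+1) ≤ tcount t S q := tcount_mono t S (by omega)
  have hTlen := typeSubseq_length t S
  have hcqT : tcount t S (q+1) ≤ tcount t S S.length := tcount_mono t S (by omega)
  have hEq0 := (expand_get t S hq1).1
  rw [if_pos hx, hs'2] at hEq0
  have hstepq : D (expandType t S) (2*q+1) = D (expandType t S) (2*q) - 1 :=
    D_step_false _ hEq0
  refine ⟨q, hodd, tp_get t S hq1 hx, by omega, by omega, ?_, ?_, by omega, ?_⟩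
  · have := tsub_get t S hsi hti; rwa [hopen] at this
  · have := tsub_get t S hq1 hx; rwa [hs'2] at this
  · intro m hm1 hm2
    have hmT : m < tcount t S S.length := by omega
    obtain ⟨jm, sm, hj1, hj2, hj3, hj4, hj5, hj6⟩ := tp_surj t S hmT
    have h5 : i < jm := tc_lt t S (by omega)
    have h6 : jm ≤ q := by
      by_contra hc
      push_neg at hc
      have := tcount_mono t S (show q+1 ≤ jm by omega)
      omega
    have h7 := hall (2*jm) (by omega) (by omega)
    have hDjm := D_expand t S jm
    rw [hj3] at hDjm
    omega

lemma close_fwd (t : Fin ℓ) (S : List (MSym ℓ)) {i : ℕ} {si : MSym ℓ}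
    (hsi : S[i]? = some si) (hti : si.1 = t) (hclose : si.2 = false) {b : ℕ}
    (h : DMatch (typeSubseq t S) b (tcount t S i)) :
    ∃ q : ℕ, (typePositions t S)[b]? = some q ∧
      DMatch (expandType t S) (2 * q + 1) (2 * i) := by
  obtain ⟨hba, haT, hTb, hTa, hD, hall⟩ := h
  rw [typeSubseq_length] at haT
  have hbT : b < tcount t S S.length := by omega
  obtain ⟨q, s', hq1, hq2, hq3, hq4, hq5, hq6⟩ := tp_surj t S hbT
  have hs'2 : s'.2 = true := by rw [hq6] at hTb; injection hTb
  have hilen : i < S.length := lt_of_get? hsi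
  have hqlen : q < S.length := lt_of_get? hq1
  have hqi : q < i := tc_lt t S (by omega)
  have hRlen := expand_length t S
  have hEi := (expand_get t S hsi).1
  rw [if_pos hti, hclose] at hEi
  have hEq := (expand_get t S hq1).2
  rw [if_pos hq2, hs'2] at hEq
  have hDi := D_expand t S i
  have hDq := D_expand t S q
  rw [hq3] at hDq
  have hEq0 := (expand_get t S hq1).1
  rw [if_pos hq2, hs'2] at hEq0
  have hstepq : D (expandType t S) (2*q+1) = D (expandType t S) (2*q) + 1 :=
    D_step_true _ hEq0
  refine ⟨q, hq4, by omega, by omega, hEq, hEi, by omega, ?_⟩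
  intro m hm1 hm2
  rcases Nat.even_or_odd m with ⟨p, hp⟩ | ⟨p, hp⟩
  · have hm : m = 2 * p := by omega
    subst hm
    have hqp : q < p := by omega
    have hpi : p ≤ i := by omega
    have hcp1 : b + 1 ≤ tcount t S p := by
      rw [← hq5]; exact tcount_mono t S (by omega)
    have hcp2 : tcount t S p ≤ tcount t S i := tcount_mono t S (by omega)
    have h1 := hall (tcount t S p) (by omega) (by omega)
    have hDp := D_expand t S p
    omega
  · have hm : m = 2 * p + 1 := by omega
    subst hm
    have hqp : q < p := by omega
    have hpi : p < i := by omega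
    have hplen : p < S.length := by omega
    obtain ⟨sp, hsp⟩ := get?_exists (l := S) hplen
    have hDp := D_expand t S p
    have hcp1 : b + 1 ≤ tcount t S p := by
      rw [← hq5]; exact tcount_mono t S (by omega)
    have hcp2 : tcount t S p ≤ tcount t S i := tcount_mono t S (by omega)
    have h1 := hall (tcount t S p) (by omega) (by omega)
    by_cases hcase : sp.1 = t ∧ sp.2 = false
    · have hEp := (expand_get t S hsp).1
      rw [if_pos hcase.1, hcase.2] at hEp
      have hstep : D (expandType t S) (2*p+1) = D (expandType t S) (2*p) - 1 :=
        D_step_false _ hEp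
      have hcp : tcount t S (p+1) = tcount t S p + 1 := tc_succ_t t S hsp hcase.1
      have hcp3 : tcount t S (p+1) ≤ tcount t S i := tcount_mono t S (by omega)
      have hTp : (typeSubseq t S)[(tcount t S p)]? = some false := by
        have := tsub_get t S hsp hcase.1; rwa [hcase.2] at this
      have hstepT : D (typeSubseq t S) (tcount t S p + 1) =
          D (typeSubseq t S) (tcount t S p) - 1 := D_step_false _ hTp
      have h2 := hall (tcount t S p + 1) (by omega) (by omega)
      omega
    · have hEp : (expandType t S)[(2*p)]? = some true := by
        have hEp0 := (expand_get t S hsp).1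
        by_cases hx : sp.1 = t
        · have hx2 : sp.2 = true := by
            rcases Bool.eq_false_or_eq_true sp.2 with h | h
            · exact h
            · exact absurd ⟨hx, h⟩ hcase
          rwa [if_pos hx, hx2] at hEp0
        · rwa [if_neg hx] at hEp0
      have hstep : D (expandType t S) (2*p+1) = D (expandType t S) (2*p) + 1 :=
        D_step_true _ hEp
      omega

lemma close_bwd (t : Fin ℓ) (S : List (MSym ℓ)) {i : ℕ} {si : MSym ℓ}
    (hsi : S[i]? = some si) (hti : si.1 = t) (hclose : si.2 = false) {j' : ℕ}
    (h : DMatch (expandType t S) j' (2 * i)) :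
    ∃ q : ℕ, j' = 2 * q + 1 ∧ (typePositions t S)[(tcount t S q)]? = some q ∧
      DMatch (typeSubseq t S) (tcount t S q) (tcount t S i) := by
  obtain ⟨hji, hiR, hRj', hR2i, hD, hall⟩ := h
  have hRlen := expand_length t S
  have hilen : i < S.length := lt_of_get? hsi
  set q := j' / 2 with hqdef
  have hqlen : q < S.length := by omega
  obtain ⟨s', hq1⟩ := get?_exists (l := S) hqlen
  have hDi := D_expand t S i
  have hDq := D_expand t S q
  have hodd : j' = 2 * q + 1 := by
    rcases Nat.even_or_odd j' with ⟨p, hp⟩ | ⟨p, hp⟩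
    · exfalso
      have hj'e : j' = 2 * q := by omega
      rw [hj'e] at hD
      omega
    · omega
  rw [hodd] at hji hD hall hRj'
  have hEq2 := (expand_get t S hq1).2
  have hx : s'.1 = t := by
    by_contra hx
    rw [if_neg hx] at hEq2
    rw [hEq2] at hRj'
    exact Bool.noConfusion (by injection hRj' : false = true)
  rw [if_pos hx] at hEq2
  have hs'2 : s'.2 = true := by
    rw [hEq2] at hRj'
    injection hRj'
  have hqi : q < i := by omega
  have hci : tcount t S (i+1) = tcount t S i + 1 := tc_succ_t t S hsi hti
  have hcq : tcount t S (q+1) = tcount t S q + 1 := tc_succ_t t S hq1 hx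
  have hcgrow : tcount t S (q+1) ≤ tcount t S i := tcount_mono t S (by omega)
  have hTlen := typeSubseq_length t S
  have hciT : tcount t S (i+1) ≤ tcount t S S.length := tcount_mono t S (by omega)
  have hEq0 := (expand_get t S hq1).1
  rw [if_pos hx, hs'2] at hEq0
  have hstepq : D (expandType t S) (2*q+1) = D (expandType t S) (2*q) + 1 :=
    D_step_true _ hEq0
  refine ⟨q, hodd, tp_get t S hq1 hx, by omega, by omega, ?_, ?_, by omega, ?_⟩
  · have := tsub_get t S hq1 hx; rwa [hs'2] at this
  · have := tsub_get t S hsi hti; rwa [hclose] at this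
  · intro m hm1 hm2
    have hmT : m < tcount t S S.length := by omega
    obtain ⟨jm, sm, hj1, hj2, hj3, hj4, hj5, hj6⟩ := tp_surj t S hmT
    have h5 : q < jm := tc_lt t S (by omega)
    have h6 : jm ≤ i := by
      by_contra hc
      push_neg at hc
      have := tcount_mono t S (show i+1 ≤ jm by omega)
      omega
    have h7 := hall (2*jm) (by omega) (by omega)
    have hDjm := D_expand t S jm
    rw [hj3] at hDjm
    omega

end Aux

/-- Let `S` be a string over `ℓ ≥ 1` types of parentheses, `t` a type, and `S_t` the
one-type string obtained by doubling the type-`t` symbols and replacing the other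
symbols by `()`. For every position `i` such that `S[i]` is a parenthesis of type `t`:
the type-`t` match of `S` at `i` exists iff the match of `S_t` at position `2i` exists,
and in that case `match_t(S, i) = ⌊match(S_t, 2i) / 2⌋`. -/
theorem type_match_via_expansion (ℓ : ℕ) (hℓ : 1 ≤ ℓ) (S : List (MSym ℓ)) (t : Fin ℓ)
    (i : ℕ) (si : MSym ℓ) (hsi : S[i]? = some si) (hti : si.1 = t) :
    ((∃ j : ℕ, TMatch t S i j) ↔ ∃ j' : ℕ, MatchRel (expandType t S) (2 * i) j') ∧
    (∀ j j' : ℕ, TMatch t S i j → MatchRel (expandType t S) (2 * i) j' → j = j' / 2) := by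
  have hatp : (typePositions t S)[(Aux.tcount t S i)]? = some i := Aux.tp_get t S hsi hti
  have hTi : (typeSubseq t S)[(Aux.tcount t S i)]? = some si.2 := Aux.tsub_get t S hsi hti
  have bwd : ∀ j', MatchRel (expandType t S) (2 * i) j' →
      ∃ q, j' = 2 * q + 1 ∧ (typePositions t S)[(Aux.tcount t S q)]? = some q ∧
        MatchRel (typeSubseq t S) (Aux.tcount t S i) (Aux.tcount t S q) := by
    intro j' hj'
    have hEi := (Aux.expand_get t S hsi).1
    rw [if_pos hti] at hEi
    rcases hj' with hO | hO
    · rw [Aux.openMatch_iff_dmatch] at hO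
      have hopen : si.2 = true := by
        have h := hEi.symm.trans hO.2.2.1
        injection h
      obtain ⟨q, h1, h2, h3⟩ := Aux.open_bwd t S hsi hti hopen hO
      exact ⟨q, h1, h2, Or.inl ((Aux.openMatch_iff_dmatch _ _ _).2 h3)⟩
    · rw [Aux.openMatch_iff_dmatch] at hO
      have hclose : si.2 = false := by
        have h := hEi.symm.trans hO.2.2.2.1
        injection h
      obtain ⟨q, h1, h2, h3⟩ := Aux.close_bwd t S hsi hti hclose hO
      exact ⟨q, h1, h2, Or.inr ((Aux.openMatch_iff_dmatch _ _ _).2 h3)⟩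
  have fwd : ∀ b, MatchRel (typeSubseq t S) (Aux.tcount t S i) b →
      ∃ q, (typePositions t S)[b]? = some q ∧
        MatchRel (expandType t S) (2 * i) (2 * q + 1) := by
    intro b hb
    rcases hb with hO | hO
    · rw [Aux.openMatch_iff_dmatch] at hO
      have hopen : si.2 = true := by
        have h := hTi.symm.trans hO.2.2.1
        injection h
      obtain ⟨q, h1, h2⟩ := Aux.open_fwd t S hsi hti hopen hO
      exact ⟨q, h1, Or.inl ((Aux.openMatch_iff_dmatch _ _ _).2 h2)⟩
    · rw [Aux.openMatch_iff_dmatch] at hO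
      have hclose : si.2 = false := by
        have h := hTi.symm.trans hO.2.2.2.1
        injection h
      obtain ⟨q, h1, h2⟩ := Aux.close_fwd t S hsi hti hclose hO
      exact ⟨q, h1, Or.inr ((Aux.openMatch_iff_dmatch _ _ _).2 h2)⟩
  constructor
  · constructor
    · rintro ⟨j, a', b, h1, h2, h3⟩
      obtain ⟨s, hs1, hs2, hs3⟩ := Aux.tp_mem t S h1
      rw [← hs3] at h3
      obtain ⟨q, _, hq2⟩ := fwd b h3
      exact ⟨2 * q + 1, hq2⟩
    · rintro ⟨j', hMR⟩
      obtain ⟨q, _, hq_tp, hq_rel⟩ := bwd j' hMR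
      exact ⟨q, Aux.tcount t S i, Aux.tcount t S q, hatp, hq_tp, hq_rel⟩
  · rintro j j' ⟨a', b, h1, h2, h3⟩ hMR
    obtain ⟨s, hs1, hs2, hs3⟩ := Aux.tp_mem t S h1
    rw [← hs3] at h3
    obtain ⟨q, hq_eq, hq_tp, hq_rel⟩ := bwd j' hMR
    have hbq : b = Aux.tcount t S q := Aux.matchRel_right_unique h3 hq_rel
    rw [hbq, hq_tp] at h2
    have hjq : q = j := by injection h2
    omega
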